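/- Let F be twice differentiable with L₂-Lipschitz Hessian, and let Δ̃ be an approximate stationary point of the cubic model m(Δ) = ⟨g,Δ⟩ + (1/2)⟨Δ,HΔ⟩ + (M/6)‖Δ‖³ satisfying ‖∇m(Δ̃)‖ ≤ ε'. Then ‖∇F(x+Δ̃)‖ ≤ ((M+L₂+1)/2)‖Δ̃‖² + ‖∇F(x) − g‖ + (1/2)‖∇²F(x) − H‖² + ε'. -/

import Mathlib

open RealInnerProductSpace Set

/-!
Write `r := g + H Δ + (M/2) ‖Δ‖ Δ` for the residual of the cubic model. Then
`∇F(x+Δ) = r + (∇F(x+Δ) - ∇F(x) - ∇²F(x) Δ) + (∇F(x) - g) + (∇²F(x) - H) Δ - (M/2) ‖Δ‖ Δ`,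
and the triangle inequality bounds the five terms by `ε'`, `(L₂/2) ‖Δ‖²` (Taylor with a Lipschitz
derivative), `‖∇F(x) - g‖`, `‖∇²F(x) - H‖ ‖Δ‖ ≤ ½ ‖∇²F(x) - H‖² + ½ ‖Δ‖²` (Young) and `(M/2) ‖Δ‖²`.
-/

section Taylor

variable {E F : Type*} [NormedAddCommGroup E] [NormedSpace ℝ E]
  [NormedAddCommGroup F] [NormedSpace ℝ F]

theorem norm_sub_sub_fderiv_le_of_lipschitz_fderiv (f : E → F) (f' : E → E →L[ℝ] F) (L : ℝ)
    (hf : ∀ x, HasFDerivAt f (f' x) x) (hlip : ∀ x y, ‖f' x - f' y‖ ≤ L * ‖x - y‖) (x Δ : E) :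
    ‖f (x + Δ) - f x - f' x Δ‖ ≤ L / 2 * ‖Δ‖ ^ 2 := by
  -- The remainder along the segment has derivative of norm `≤ L ‖Δ‖² t`, so it is fenced by
  -- `L ‖Δ‖² t² / 2`; this is where the factor `1/2` comes from.
  set φ : ℝ → F := fun t => f (x + t • Δ) - f x - t • f' x Δ
  have hφ : ∀ t : ℝ, HasDerivAt φ (f' (x + t • Δ) Δ - f' x Δ) t := fun t => by
    have hline : HasDerivAt (fun s : ℝ => x + s • Δ) Δ t := by
      simpa using ((hasDerivAt_id t).smul_const Δ).const_add x
    have hlin : HasDerivAt (fun s : ℝ => s • f' x Δ) (f' x Δ) t := by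
      simpa using (hasDerivAt_id t).smul_const (f' x Δ)
    exact (((hf _).comp_hasDerivAt t hline).sub_const (f x)).sub hlin
  have hB : ∀ t : ℝ, HasDerivAt (fun s : ℝ => L * ‖Δ‖ ^ 2 / 2 * s ^ 2) (L * ‖Δ‖ ^ 2 * t) t :=
    fun t => by
      simpa [mul_assoc] using
        ((hasDerivAt_pow 2 t).const_mul (L * ‖Δ‖ ^ 2 / 2)).congr_deriv (by ring)
  have hbound : ∀ t ∈ Ico (0 : ℝ) 1, ‖f' (x + t • Δ) Δ - f' x Δ‖ ≤ L * ‖Δ‖ ^ 2 * t := by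
    intro t ht
    calc ‖f' (x + t • Δ) Δ - f' x Δ‖ ≤ ‖f' (x + t • Δ) - f' x‖ * ‖Δ‖ :=
          (f' (x + t • Δ) - f' x).le_opNorm Δ
      _ ≤ L * (t * ‖Δ‖) * ‖Δ‖ := by
          gcongr
          simpa [norm_smul, abs_of_nonneg ht.1] using hlip (x + t • Δ) x
      _ = L * ‖Δ‖ ^ 2 * t := by ring
  have h1 := image_norm_le_of_norm_deriv_right_le_deriv_boundary
    (fun t _ => (hφ t).continuousAt.continuousWithinAt) (fun t _ => (hφ t).hasDerivWithinAt)
    (by simp [φ]) hB hbound (right_mem_Icc.2 zero_le_one)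
  simpa [φ, sub_right_comm, div_mul_eq_mul_div] using h1

end Taylor

theorem norm_apply_le_half_sq_add_half_sq {E F : Type*} [SeminormedAddCommGroup E]
    [NormedSpace ℝ E] [SeminormedAddCommGroup F] [NormedSpace ℝ F] (A : E →L[ℝ] F) (v : E) :
    ‖A v‖ ≤ 1 / 2 * ‖A‖ ^ 2 + 1 / 2 * ‖v‖ ^ 2 := by
  have := two_mul_le_add_sq ‖A‖ ‖v‖
  nlinarith [A.le_opNorm v]

theorem stmt_19_general (d : ℕ)
    (gradF : EuclideanSpace ℝ (Fin d) → EuclideanSpace ℝ (Fin d))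
    (hessF : EuclideanSpace ℝ (Fin d) → EuclideanSpace ℝ (Fin d) →L[ℝ] EuclideanSpace ℝ (Fin d))
    (L₂ M : ℝ) (hM : 0 < M)
    (hhess : ∀ x, HasFDerivAt gradF (hessF x) x)
    (hlip : ∀ x y, ‖hessF x - hessF y‖ ≤ L₂ * ‖x - y‖)
    (g : EuclideanSpace ℝ (Fin d))
    (H : EuclideanSpace ℝ (Fin d) →L[ℝ] EuclideanSpace ℝ (Fin d))
    (ε' : ℝ)
    (Δ : EuclideanSpace ℝ (Fin d))
    (happrox : ‖g + H Δ + (M / 2) • (‖Δ‖ • Δ)‖ ≤ ε')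
    (x : EuclideanSpace ℝ (Fin d)) :
    ‖gradF (x + Δ)‖ ≤
      (M + L₂ + 1) / 2 * ‖Δ‖ ^ 2 + ‖gradF x - g‖ + 1 / 2 * ‖hessF x - H‖ ^ 2 + ε' := by
  have htaylor := norm_sub_sub_fderiv_le_of_lipschitz_fderiv gradF hessF L₂ hhess hlip x Δ
  have hyoung := norm_apply_le_half_sq_add_half_sq (hessF x - H) Δ
  have hcubic : ‖(M / 2) • (‖Δ‖ • Δ)‖ = M / 2 * ‖Δ‖ ^ 2 := by
    rw [norm_smul, norm_smul, norm_norm, Real.norm_of_nonneg (by positivity)]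
    ring
  have hdecomp : gradF (x + Δ) = (g + H Δ + (M / 2) • (‖Δ‖ • Δ))
      + (gradF (x + Δ) - gradF x - hessF x Δ) + (gradF x - g) + (hessF x - H) Δ
      - (M / 2) • (‖Δ‖ • Δ) := by
    rw [sub_apply]
    abel
  have htriangle : ‖gradF (x + Δ)‖ ≤ ‖g + H Δ + (M / 2) • (‖Δ‖ • Δ)‖
      + ‖gradF (x + Δ) - gradF x - hessF x Δ‖ + ‖gradF x - g‖ + ‖(hessF x - H) Δ‖
      + ‖(M / 2) • (‖Δ‖ • Δ)‖ := by
    conv_lhs => rw [hdecomp]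
    exact (norm_sub_le _ _).trans (add_le_add_left norm_add₄_le _)
  linarith

theorem stmt_19 (d : ℕ)
    (F : EuclideanSpace ℝ (Fin d) → ℝ)
    (gradF : EuclideanSpace ℝ (Fin d) → EuclideanSpace ℝ (Fin d))
    (hessF : EuclideanSpace ℝ (Fin d) → EuclideanSpace ℝ (Fin d) →L[ℝ] EuclideanSpace ℝ (Fin d))
    (L₂ M : ℝ) (hL₂ : 0 ≤ L₂) (hM : 0 < M)
    (hgrad : ∀ x, HasGradientAt F (gradF x) x)
    (hhess : ∀ x, HasFDerivAt gradF (hessF x) x)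
    (hlip : ∀ x y, ‖hessF x - hessF y‖ ≤ L₂ * ‖x - y‖)
    (g : EuclideanSpace ℝ (Fin d))
    (H : EuclideanSpace ℝ (Fin d) →L[ℝ] EuclideanSpace ℝ (Fin d))
    (hsymm : ∀ u w, ⟪H u, w⟫ = ⟪u, H w⟫)
    (ε' : ℝ) (hε' : 0 ≤ ε')
    (Δ : EuclideanSpace ℝ (Fin d))
    (happrox : ‖g + H Δ + (M / 2) • (‖Δ‖ • Δ)‖ ≤ ε')
    (x : EuclideanSpace ℝ (Fin d)) :
    ‖gradF (x + Δ)‖ ≤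
      (M + L₂ + 1) / 2 * ‖Δ‖ ^ 2 + ‖gradF x - g‖ + 1 / 2 * ‖hessF x - H‖ ^ 2 + ε' :=
  stmt_19_general d gradF hessF L₂ M hM hhess hlip g H ε' Δ happrox x
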